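/- Let G be a finite connected simple graph with N ≥ 2 vertices and M ≥ 1 edges, with degree sequence d_(1) ≥ … ≥ d_(N), and let c be a {0,1}-characteristic with n1 vertices having characteristic 1 and n0 = N − n1 having characteristic 0, where 0 < n1 < N. Set δ = 2M/(N(N−1)), m̄10 = n1·n0·δ, heterophilicity H = m10/m̄10, UBm10 = min(M, n1·n0, min(Σ_{i=1}^{n1} min(d_(i), n0), Σ_{i=1}^{n0} min(d_(i), n1))), LBm10 = max(1, T(n1) − n1(n1−1)) (difference in the integers), H_max = UBm10/m̄10 and H_min = LBm10/m̄10. Then H_min ≤ H ≤ H_max (as real numbers). -/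

import Mathlib

/-!
Let `S` be the set of vertices of characteristic `1`; `m10` counts the edges of the cut between
`S` and `Sᶜ`. From above: a cut edge is an edge, there are at most `#S * #Sᶜ` pairs, and a vertex
of `S` (of `Sᶜ`) carries at most `min (deg v) #Sᶜ` (`min (deg v) #S`) cut edges; as `min · k` is
monotone, summing it over any `n` vertices gives at most its sum over the `n` largest degrees.
From below: the degrees in `S` add up to at least the tail sum `T(#S)`, and at most `#S (#S - 1)`
of that is spent on edges inside `S`; connectivity forces at least one cut edge. Dividing by
`m̄10 ≥ 0` preserves both inequalities.
-/

/-- The number of edges of `G` with one endpoint of characteristic `1` and one of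
characteristic `0`. -/
def m10 {V : Type*} [Fintype V] [DecidableEq V] (G : SimpleGraph V) [DecidableRel G.Adj]
    (c : V → Bool) : ℕ :=
  (G.edgeFinset.filter (fun e => (∃ v ∈ e, c v = true) ∧ (∃ v ∈ e, c v = false))).card

open Finset

namespace Finset

variable {ι M : Type*} [AddCommMonoid M] [LinearOrder M] [IsOrderedAddMonoid M]
  {s t : Finset ι} {f : ι → M}

theorem sum_le_sum_of_card_eq_of_forall_le (hst : #s = #t)
    (hf : ∀ a ∈ s, ∀ b ∈ t, f a ≤ f b) : ∑ a ∈ s, f a ≤ ∑ b ∈ t, f b := by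
  obtain rfl | hs := s.eq_empty_or_nonempty
  · rw [card_empty, eq_comm, card_eq_zero] at hst
    simp [hst]
  obtain ⟨a₀, ha₀, hmax⟩ := s.exists_max_image f hs
  calc ∑ a ∈ s, f a ≤ #s • f a₀ := sum_le_card_nsmul s f _ hmax
    _ = #t • f a₀ := by rw [hst]
    _ ≤ ∑ b ∈ t, f b := card_nsmul_le_sum t f _ (hf a₀ ha₀)

theorem sum_le_sum_of_card_eq_of_forall_sdiff_le [DecidableEq ι] (hst : #s = #t)
    (hf : ∀ a ∈ s \ t, ∀ b ∈ t \ s, f a ≤ f b) : ∑ a ∈ s, f a ≤ ∑ b ∈ t, f b := by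
  rw [← sum_inter_add_sum_sdiff s t, ← sum_inter_add_sum_sdiff t s, inter_comm t s]
  gcongr _ + ?_
  exact sum_le_sum_of_card_eq_of_forall_le (card_sdiff_comm hst) hf

end Finset

namespace Fin

theorem card_filter_sub_le_val {N n : ℕ} (hn : n ≤ N) :
    #{i : Fin N | N - n ≤ (i : ℕ)} = n := by
  have h := card_filter_add_card_filter_not (s := univ) (p := fun i : Fin N => (i : ℕ) < N - n)
  simp only [not_lt, card_univ, Fintype.card_fin, card_filter_val_lt] at h
  omega

end Fin

namespace Antitone

variable {N n : ℕ} {M : Type*} [AddCommMonoid M] [LinearOrder M] [IsOrderedAddMonoid M]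
  {g : Fin N → M} {A : Finset (Fin N)}

theorem sum_le_sum_filter_val_lt (hg : Antitone g) (hA : #A = n) :
    ∑ i ∈ A, g i ≤ ∑ i ∈ univ.filter (fun i : Fin N => (i : ℕ) < n), g i := by
  have hn : n ≤ N := hA ▸ card_le_univ A |>.trans_eq (Fintype.card_fin N)
  refine sum_le_sum_of_card_eq_of_forall_sdiff_le (by rw [hA, Fin.card_filter_val_lt]; omega) ?_
  intro a ha b hb
  simp only [mem_sdiff, mem_filter, mem_univ, true_and] at ha hb
  exact hg (Fin.le_def.mpr (by omega))

theorem sum_filter_sub_le_val_le_sum (hg : Antitone g) (hA : #A = n) :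
    ∑ i ∈ univ.filter (fun i : Fin N => N - n ≤ (i : ℕ)), g i ≤ ∑ i ∈ A, g i := by
  have hn : n ≤ N := hA ▸ card_le_univ A |>.trans_eq (Fintype.card_fin N)
  refine sum_le_sum_of_card_eq_of_forall_sdiff_le (by rw [hA, Fin.card_filter_sub_le_val hn]) ?_
  intro a ha b hb
  simp only [mem_sdiff, mem_filter, mem_univ, true_and] at ha hb
  exact hg (Fin.le_def.mpr (by omega))

end Antitone

namespace SimpleGraph

variable {V : Type*} (G : SimpleGraph V) [DecidableRel G.Adj]

theorem card_interedges_eq_sum_card_filter_adj (s t : Finset V) :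
    #(G.interedges s t) = ∑ v ∈ s, #{w ∈ t | G.Adj v w} := by
  simp_rw [interedges_def, card_filter, sum_product]

theorem card_interedges_comm (s t : Finset V) : #(G.interedges s t) = #(G.interedges t s) :=
  have := G.symm
  Rel.card_interedges_comm s t

variable [Fintype V]

theorem card_interedges_le_sum_min_degree (s t : Finset V) :
    #(G.interedges s t) ≤ ∑ v ∈ s, min (G.degree v) #t := by
  rw [card_interedges_eq_sum_card_filter_adj]
  refine sum_le_sum fun v _ => le_min ?_ (card_filter_le _ _)
  rw [← card_neighborFinset_eq_degree]
  exact card_le_card fun w hw => (mem_neighborFinset ..).2 (mem_filter.1 hw).2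

variable {N : ℕ} {d : Fin N → ℕ} {e : Fin N ≃ V}

theorem sum_map_symm_comp_eq_sum_degree (hd : ∀ i, d i = G.degree (e i)) (f : ℕ → ℕ)
    (s : Finset V) :
    ∑ i ∈ s.map e.symm.toEmbedding, f (d i) = ∑ v ∈ s, f (G.degree v) := by
  refine (sum_map _ _ _).trans (sum_congr rfl fun v _ => ?_)
  obtain ⟨i, rfl⟩ := e.surjective v
  simp [hd]

theorem sum_degree_le_sum_head (hd : ∀ i, d i = G.degree (e i)) (hanti : Antitone d)
    {f : ℕ → ℕ} (hf : Monotone f) (s : Finset V) :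
    ∑ v ∈ s, f (G.degree v) ≤ ∑ i ∈ univ.filter (fun i : Fin N => (i : ℕ) < #s), f (d i) :=
  G.sum_map_symm_comp_eq_sum_degree hd f s ▸
    (hf.comp_antitone hanti).sum_le_sum_filter_val_lt (card_map _)

theorem sum_tail_le_sum_degree (hd : ∀ i, d i = G.degree (e i)) (hanti : Antitone d)
    (s : Finset V) :
    ∑ i ∈ univ.filter (fun i : Fin N => N - #s ≤ (i : ℕ)), d i ≤ ∑ v ∈ s, G.degree v :=
  G.sum_map_symm_comp_eq_sum_degree hd id s ▸ hanti.sum_filter_sub_le_val_le_sum (card_map _)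

variable [DecidableEq V]

theorem sum_degree_le_mul_add_card_interedges (s : Finset V) :
    ∑ v ∈ s, G.degree v ≤ #s * (#s - 1) + #(G.interedges s sᶜ) := by
  rw [card_interedges_eq_sum_card_filter_adj, ← smul_eq_mul, ← sum_const, ← sum_add_distrib]
  refine sum_le_sum fun v hv => ?_
  have hsplit : G.degree v = #{w ∈ s | G.Adj v w} + #{w ∈ sᶜ | G.Adj v w} := by
    rw [← card_neighborFinset_eq_degree, ← card_union_of_disjoint
      (disjoint_filter_filter disjoint_compl_right), ← filter_union, union_compl,
      neighborFinset_eq_filter]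
  have hinside : #{w ∈ s | G.Adj v w} ≤ #s - 1 := by
    rw [← card_erase_of_mem hv]
    refine card_le_card fun w hw => ?_
    rw [mem_filter] at hw
    exact mem_erase.2 ⟨(G.ne_of_adj hw.2).symm, hw.1⟩
  omega

theorem card_interedges_compl_le_sum_head (hd : ∀ i, d i = G.degree (e i)) (hanti : Antitone d)
    (s : Finset V) :
    #(G.interedges s sᶜ) ≤ ∑ i ∈ univ.filter (fun i : Fin N => (i : ℕ) < #s), min (d i) #sᶜ :=
  (G.card_interedges_le_sum_min_degree s sᶜ).trans
    (G.sum_degree_le_sum_head hd hanti (fun _ _ h => min_le_min_right _ h) s)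

theorem sum_tail_sub_le_card_interedges (hd : ∀ i, d i = G.degree (e i)) (hanti : Antitone d)
    (s : Finset V) :
    ∑ i ∈ univ.filter (fun i : Fin N => N - #s ≤ (i : ℕ)), (d i : ℤ) - #s * (#s - 1)
      ≤ #(G.interedges s sᶜ) := by
  have hcast : ((#s * (#s - 1) : ℕ) : ℤ) = #s * (#s - 1) := by
    cases #s <;> simp
  have h := Nat.cast_le (α := ℤ) |>.2 <|
    (G.sum_tail_le_sum_degree hd hanti s).trans (G.sum_degree_le_mul_add_card_interedges s)
  rw [Nat.cast_sum, Nat.cast_add, hcast] at h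
  linarith

theorem m10_eq_card_interedges (c : V → Bool) :
    m10 G c =
      #(G.interedges (univ.filter fun v => c v = true) (univ.filter fun v => c v = true)ᶜ) := by
  symm
  refine card_bij (fun p _ => s(p.1, p.2)) ?_ ?_ ?_
  · rintro ⟨a, b⟩ hab
    simp only [mk_mem_interedges_iff, mem_compl, mem_filter, mem_univ, true_and,
      Bool.not_eq_true] at hab
    simp [hab]
  · rintro ⟨a, b⟩ hab ⟨a', b'⟩ hab' h
    simp only [mk_mem_interedges_iff, mem_compl, mem_filter, mem_univ, true_and,
      Bool.not_eq_true] at hab hab'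
    rcases Sym2.eq_iff.1 h with ⟨rfl, rfl⟩ | ⟨rfl, rfl⟩
    · rfl
    · simp_all
  · intro e he
    induction e using Sym2.ind with
    | _ x y =>
    simp only [mem_filter, mem_edgeFinset, mem_edgeSet, Sym2.mem_iff, exists_eq_or_imp,
      exists_eq_left] at he
    obtain ⟨hxy, hc1, hc0⟩ := he
    by_cases hx : c x = true
    · have hy : c y = false := hc0.resolve_left (by simp [hx])
      exact ⟨(x, y), by simp [mk_mem_interedges_iff, hx, hy, hxy], rfl⟩
    · have hy : c y = true := hc1.resolve_left hx
      exact ⟨(y, x), by simp [mk_mem_interedges_iff, hx, hy, hxy.symm], Sym2.eq_swap⟩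

variable {G} in
theorem Connected.interedges_compl_nonempty (hG : G.Connected) {s : Finset V} (hs : s.Nonempty)
    (hs' : sᶜ.Nonempty) :
    (G.interedges s sᶜ).Nonempty := by
  obtain ⟨u, hu⟩ := hs
  obtain ⟨w, hw⟩ := hs'
  obtain ⟨d, -, hd₁, hd₂⟩ :=
    (hG.preconnected u w).some.exists_boundary_dart (s : Set V) hu (by simpa using hw)
  exact ⟨(d.fst, d.snd), (mem_interedges_iff ..).2 ⟨hd₁, by simpa using hd₂, d.adj⟩⟩

end SimpleGraph

theorem heterophilicity_bounds_general {V : Type*} [Fintype V] [DecidableEq V]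
    (G : SimpleGraph V) [DecidableRel G.Adj] (c : V → Bool)
    (hconn : G.Connected)
    (N M n1 n0 : ℕ) (hN : Fintype.card V = N) (hM : G.edgeFinset.card = M)
    (hn1 : (Finset.univ.filter (fun v => c v = true)).card = n1)
    (hn0 : n0 = N - n1)
    (hpos : 0 < n1) (hlt : n1 < N)
    (d : Fin N → ℕ) (hanti : Antitone d)
    (e : Fin N ≃ V) (hd : ∀ i, d i = G.degree (e i))
    (UBm10 : ℕ)
    (hUB : UBm10 = min M (min (n1 * n0)
      (min (∑ i ∈ Finset.univ.filter (fun i : Fin N => (i : ℕ) < n1), min (d i) n0)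
           (∑ i ∈ Finset.univ.filter (fun i : Fin N => (i : ℕ) < n0), min (d i) n1))))
    (T LBm10 : ℤ)
    (hT : T = ∑ i ∈ Finset.univ.filter (fun i : Fin N => N - n1 ≤ (i : ℕ)), (d i : ℤ))
    (hLB : LBm10 = max 1 (T - (n1 : ℤ) * ((n1 : ℤ) - 1)))
    (δ mbar10 H Hmax Hmin : ℝ)
    (hδ : δ = 2 * M / (N * ((N : ℝ) - 1)))
    (hmbar : mbar10 = (n1 : ℝ) * (n0 : ℝ) * δ)
    (hH : H = (m10 G c : ℝ) / mbar10)
    (hHmax : Hmax = (UBm10 : ℝ) / mbar10)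
    (hHmin : Hmin = (LBm10 : ℝ) / mbar10) :
    Hmin ≤ H ∧ H ≤ Hmax := by
  set S := Finset.univ.filter (fun v => c v = true)
  have hSc : #Sᶜ = n0 := by rw [card_compl, hN, hn1, hn0]
  have hcut : m10 G c = #(G.interedges S Sᶜ) := G.m10_eq_card_interedges c
  have hupper : m10 G c ≤ UBm10 := by
    refine hUB ▸ le_min (hM ▸ card_filter_le _ _) (hcut ▸ le_min ?_ (le_min ?_ ?_))
    · simpa only [hn1, hSc] using G.card_interedges_le_mul S Sᶜ
    · simpa only [hn1, hSc] using G.card_interedges_compl_le_sum_head hd hanti S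
    · simpa only [G.card_interedges_comm Sᶜ, compl_compl, hn1, hSc] using
        G.card_interedges_compl_le_sum_head hd hanti Sᶜ
  have hlower : LBm10 ≤ m10 G c := by
    refine hLB ▸ hT ▸ hcut ▸ max_le ?_ ?_
    · exact_mod_cast card_pos.2 <| hconn.interedges_compl_nonempty
        (card_pos.1 (by omega)) (card_pos.1 (by omega))
    · simpa only [hn1] using G.sum_tail_sub_le_card_interedges hd hanti S
  have hmbar_nonneg : 0 ≤ mbar10 := by
    have hN1 : (0 : ℝ) ≤ N - 1 := by rw [sub_nonneg]; exact_mod_cast hpos.trans hlt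
    rw [hmbar, hδ]
    exact mul_nonneg (by positivity) (div_nonneg (by positivity) (mul_nonneg (by positivity) hN1))
  rw [hH, hHmax, hHmin]
  exact ⟨div_le_div_of_nonneg_right (mod_cast hlower) hmbar_nonneg,
    div_le_div_of_nonneg_right (mod_cast hupper) hmbar_nonneg⟩

/-- for a connected graph with `0 < n1 < N`, the heterophilicity
`H = m10 / m̄10` is bounded by `H_min = LBm10 / m̄10` and `H_max = UBm10 / m̄10`, where
`UBm10 = min(M, n1·n0, min(∑_{i=1}^{n1} min(d_(i), n0), ∑_{i=1}^{n0} min(d_(i), n1)))` and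
`LBm10 = max(1, T(n1) − n1(n1−1))` (difference in ℤ). -/
theorem heterophilicity_bounds {V : Type*} [Fintype V] [DecidableEq V]
    (G : SimpleGraph V) [DecidableRel G.Adj] (c : V → Bool)
    (hconn : G.Connected)
    (N M n1 n0 : ℕ) (hN : Fintype.card V = N) (hM : G.edgeFinset.card = M)
    (hn1 : (Finset.univ.filter (fun v => c v = true)).card = n1)
    (hn0 : n0 = N - n1)
    (hN2 : 2 ≤ N) (hM1 : 1 ≤ M) (hpos : 0 < n1) (hlt : n1 < N)
    (d : Fin N → ℕ) (hanti : Antitone d)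
    (e : Fin N ≃ V) (hd : ∀ i, d i = G.degree (e i))
    (UBm10 : ℕ)
    (hUB : UBm10 = min M (min (n1 * n0)
      (min (∑ i ∈ Finset.univ.filter (fun i : Fin N => (i : ℕ) < n1), min (d i) n0)
           (∑ i ∈ Finset.univ.filter (fun i : Fin N => (i : ℕ) < n0), min (d i) n1))))
    (T LBm10 : ℤ)
    (hT : T = ∑ i ∈ Finset.univ.filter (fun i : Fin N => N - n1 ≤ (i : ℕ)), (d i : ℤ))
    (hLB : LBm10 = max 1 (T - (n1 : ℤ) * ((n1 : ℤ) - 1)))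
    (δ mbar10 H Hmax Hmin : ℝ)
    (hδ : δ = 2 * M / (N * ((N : ℝ) - 1)))
    (hmbar : mbar10 = (n1 : ℝ) * (n0 : ℝ) * δ)
    (hH : H = (m10 G c : ℝ) / mbar10)
    (hHmax : Hmax = (UBm10 : ℝ) / mbar10)
    (hHmin : Hmin = (LBm10 : ℝ) / mbar10) :
    Hmin ≤ H ∧ H ≤ Hmax :=
  heterophilicity_bounds_general G c hconn N M n1 n0 hN hM hn1 hn0 hpos hlt d hanti e hd UBm10 hUB T
    LBm10 hT hLB δ mbar10 H Hmax Hmin hδ hmbar hH hHmax hHmin
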